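/- Let Z be a comparison between interpretations I and I' satisfying the counting condition (existence of a bijection h ⊆ Z between r-successor sets of Z-related points, for each role name r). Then concepts of the form (≤ n r.(¬C)) with C semi-positive are preserved by Z: if Z(x,x') and x has at most n distinct r-successors outside C^I, then x' has at most n distinct r-successors outside C^{I'}. -/

import Mathlib

structure Interp (CN RN : Type) (D : Type) where
  cI : CN → D → Prop
  rI : RN → D → D → Prop

inductive SP (CN RN : Type) : Type where
  | top : SP CN RN
  | bot : SP CN RN
  | atom : CN → SP CN RN
  | or : SP CN RN → SP CN RN → SP CN RN
  | and : SP CN RN → SP CN RN → SP CN RN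
  | ex : RN → SP CN RN → SP CN RN
  | all : RN → SP CN RN → SP CN RN

def SP.sem {CN RN D : Type} (I : Interp CN RN D) : SP CN RN → D → Prop
  | .top => fun _ => True
  | .bot => fun _ => False
  | .atom A => I.cI A
  | .or C₁ C₂ => fun x => C₁.sem I x ∨ C₂.sem I x
  | .and C₁ C₂ => fun x => C₁.sem I x ∧ C₂.sem I x
  | .ex r C => fun x => ∃ y, I.rI r x y ∧ C.sem I y
  | .all r C => fun x => ∀ y, I.rI r x y → C.sem I y

/-- `S` has at least `n` distinct elements. -/
def AtLeast {α : Type} (n : ℕ) (S : Set α) : Prop :=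
  ∃ f : Fin n ↪ α, ∀ i, f i ∈ S

/-- `S` has at most `n` distinct elements. -/
def AtMost {α : Type} (n : ℕ) (S : Set α) : Prop :=
  ¬ AtLeast (n + 1) S

def IsComparisonQ {CN RN D D' : Type} (I : Interp CN RN D) (I' : Interp CN RN D')
    (Z : D → D' → Prop) : Prop :=
  (∀ A x x', Z x x' → I.cI A x → I'.cI A x') ∧
  (∀ r x x' y, Z x x' → I.rI r x y → ∃ y', Z y y' ∧ I'.rI r x' y') ∧
  (∀ r x x' y', Z x x' → I'.rI r x' y' → ∃ y, Z y y' ∧ I.rI r x y) ∧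
  (∀ (r : RN) x x', Z x x' →
    ∃ h : {y // I.rI r x y} ≃ {y' // I'.rI r x' y'}, ∀ y, Z y.1 (h y).1)

theorem AtLeast.of_embedding {α β : Type} {n : ℕ} {S : Set α} {T : Set β} (e : S ↪ T)
    (hS : AtLeast n S) : AtLeast n T :=
  let ⟨f, hf⟩ := hS
  ⟨((f.codRestrict S hf).trans e).trans (Function.Embedding.subtype _), fun _ => (e _).2⟩

theorem AtMost.of_embedding {α β : Type} {n : ℕ} {S : Set α} {T : Set β} (e : T ↪ S)
    (hS : AtMost n S) : AtMost n T :=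
  fun hT => hS (hT.of_embedding e)

/-- The embedding is `h.symm`: since `P` transfers forwards along `Z`, an element outside `P'`
cannot be matched with one inside `P`. -/
theorem Equiv.nonempty_embedding_setOf_not_of_forall_rel {D D' : Type} {p : D → Prop}
    {q : D' → Prop} {P : D → Prop} {P' : D' → Prop} {Z : D → D' → Prop}
    (h : {y // p y} ≃ {y' // q y'}) (hZ : ∀ y, Z y.1 (h y).1)
    (hP : ∀ y y', Z y y' → P y → P' y') :
    Nonempty ({y' | q y' ∧ ¬ P' y'} ↪ {y | p y ∧ ¬ P y}) := by
  refine ⟨⟨fun y' => ⟨h.symm ⟨y', y'.2.1⟩, (h.symm _).2, fun hy => y'.2.2 ?_⟩, ?_⟩⟩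
  · simpa using hP _ _ (hZ (h.symm ⟨y', y'.2.1⟩)) hy
  · intro y₁ y₂ hy
    simp only [Subtype.mk.injEq] at hy
    simpa [Subtype.ext_iff] using h.symm.injective (Subtype.ext hy)

theorem atMostNeg_preserved_general {CN RN D D' : Type}
    (I : Interp CN RN D) (I' : Interp CN RN D') (Z : D → D' → Prop)
    (hZ : IsComparisonQ I I' Z)
    (C : SP CN RN)
    (hpres : ∀ x x', Z x x' → C.sem I x → C.sem I' x') :
    ∀ (n : ℕ) (r : RN) (x : D) (x' : D'), Z x x' →
      AtMost n {y | I.rI r x y ∧ ¬ C.sem I y} →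
      AtMost n {y' | I'.rI r x' y' ∧ ¬ C.sem I' y'} := by
  intro n r x x' hxx'
  obtain ⟨h, hh⟩ := hZ.2.2.2 r x x' hxx'
  obtain ⟨e⟩ := h.nonempty_embedding_setOf_not_of_forall_rel hh hpres
  exact AtMost.of_embedding e

/-- Concepts `≤ n r.(¬C)` with `C` semi-positive are preserved by comparisons
satisfying the counting condition. -/
theorem atMostNeg_preserved {CN RN D D' : Type} [Nonempty D] [Nonempty D']
    (I : Interp CN RN D) (I' : Interp CN RN D') (Z : D → D' → Prop)
    (hZ : IsComparisonQ I I' Z)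
    (C : SP CN RN)
    (hpres : ∀ x x', Z x x' → C.sem I x → C.sem I' x') :
    ∀ (n : ℕ) (r : RN) (x : D) (x' : D'), Z x x' →
      AtMost n {y | I.rI r x y ∧ ¬ C.sem I y} →
      AtMost n {y' | I'.rI r x' y' ∧ ¬ C.sem I' y'} :=
  atMostNeg_preserved_general I I' Z hZ C hpres
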